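/- arXiv:2409.07777 — 4 statements merged into one kernel-verified Lean document; each statement's English description precedes it below -/
import Mathlib

section
/- Let 𝒵 be a finite set and Q₀, Q₁ probability mass functions on 𝒵 with Q₁ absolutely continuous with respect to Q₀ and Q₁ ≠ Q₀. Let n, L be positive integers, N = nL, and α ∈ (0,1). Then the relative entropy between the slotted mixture Q_α^N and the product distribution Q₀^⊗N satisfies D(Q_α^N ‖ Q₀^⊗N) ≤ exp(n α² χ₂(Q₁‖Q₀) − log L). -/
/-!
The termwise bound `p log (p/q) ≤ p²/q - p` (from `log x ≤ x - 1`) bounds the relative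
entropy by the χ²-distance, i.e. by the second moment `∑ P²/Q` minus one. Treat a whole slot
`𝒵ⁿ` as one letter. Expanding the square of the slotted mixture, the cross term of two different
slots is `1` (because `Q_α ≪ Q₀`), while a slot against itself gives the second moment of
`Q_α^{⊗n}`, which is `(∑ Q_α²/Q₀)ⁿ = (1 + α² χ₂(Q₁‖Q₀))ⁿ`. So the second moment of the mixture
is `1 + ((1 + α²χ₂)ⁿ - 1)/L`, and `1 + x ≤ eˣ` finishes.
-/

open Finset Real

lemma mul_log_div_le_sq_div_sub {p q : ℝ} (hp : 0 ≤ p) (hq : 0 ≤ q) (hpq : q = 0 → p = 0) :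
    p * log (p / q) ≤ p ^ 2 / q - p := by
  rcases hp.eq_or_lt with rfl | hp
  · simp
  have hq : 0 < q := hq.lt_of_ne fun h => hp.ne' (hpq h.symm)
  calc p * log (p / q) ≤ p * (p / q - 1) :=
        mul_le_mul_of_nonneg_left (log_le_sub_one_of_pos (by positivity)) hp.le
    _ = p ^ 2 / q - p := by ring

lemma sum_mul_log_div_le_sum_sq_div_sub_sum {X : Type*} [Fintype X] {P Q : X → ℝ}
    (hP : ∀ x, 0 ≤ P x) (hQ : ∀ x, 0 ≤ Q x) (hPQ : ∀ x, Q x = 0 → P x = 0) :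
    ∑ x, P x * log (P x / Q x) ≤ ∑ x, P x ^ 2 / Q x - ∑ x, P x := by
  rw [← sum_sub_distrib]
  exact sum_le_sum fun x _ => mul_log_div_le_sq_div_sub (hP x) (hQ x) (hPQ x)

lemma sum_mixture_sq_div {X : Type*} [Fintype X] {q p : X → ℝ}
    (hq : ∑ x, q x = 1) (hp : ∑ x, p x = 1) (hac : ∀ x, q x = 0 → p x = 0) (α : ℝ) :
    ∑ x, ((1 - α) * q x + α * p x) ^ 2 / q x = 1 + α ^ 2 * ∑ x, (p x - q x) ^ 2 / q x := by
  have hx : ∀ x, ((1 - α) * q x + α * p x) ^ 2 / q x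
      = q x + 2 * α * (p x - q x) + α ^ 2 * ((p x - q x) ^ 2 / q x) := by
    intro x
    rcases eq_or_ne (q x) 0 with h | h
    · simp [h, hac x h]
    · field_simp
      ring
  have hdiff : ∑ x, (p x - q x) = 0 := by rw [sum_sub_distrib, hp, hq, sub_self]
  simp only [hx, sum_add_distrib, ← mul_sum, hq, hdiff]
  ring

lemma sum_prod_sq_div_prod {X : Type*} [Fintype X] (p q : X → ℝ) (n : ℕ) :
    ∑ w : Fin n → X, (∏ i, p (w i)) ^ 2 / ∏ i, q (w i) = (∑ x, p x ^ 2 / q x) ^ n := by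
  simp only [← prod_pow, ← prod_div_distrib]
  exact (Fintype.sum_pow (fun x => p x ^ 2 / q x) n).symm

lemma prod_comp_eq_zero_of_imp {ι X : Type*} [Fintype ι] {q p : X → ℝ}
    (hac : ∀ x, q x = 0 → p x = 0) {w : ι → X} (h : ∏ i, q (w i) = 0) :
    ∏ i, p (w i) = 0 := by
  obtain ⟨i, -, hi⟩ := prod_eq_zero_iff.mp h
  exact prod_eq_zero (mem_univ i) (hac _ hi)

section SlottedMixture

variable {X ι : Type*} [Fintype ι] [DecidableEq ι] {p0 p1 : X → ℝ}

variable (p0 p1) in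
noncomputable def slotDensity (t : ι) (z : ι → X) : ℝ :=
  ∏ ℓ, if ℓ = t then p1 (z ℓ) else p0 (z ℓ)

variable (p0 p1) in
/-- With `X = 𝒵ⁿ`, `p0 = Q₀^{⊗n}` and `p1 = Q_α^{⊗n}` this is the slotted mixture `Q_α^N`. -/
noncomputable def slottedMixture (z : ι → X) : ℝ :=
  1 / (Fintype.card ι : ℝ) * ∑ t, slotDensity p0 p1 t z

lemma slottedMixture_eq_zero (hac : ∀ x, p0 x = 0 → p1 x = 0) {z : ι → X}
    (hz : ∏ ℓ, p0 (z ℓ) = 0) : slottedMixture p0 p1 z = 0 := by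
  obtain ⟨ℓ, -, hℓ⟩ := prod_eq_zero_iff.mp hz
  have hslot : ∀ t, slotDensity p0 p1 t z = 0 := fun t =>
    prod_eq_zero (mem_univ ℓ) (by split_ifs <;> simp [hℓ, hac _ hℓ])
  simp [slottedMixture, hslot]

variable [Fintype X]

lemma sum_slotDensity (hp0 : ∑ x, p0 x = 1) (hp1 : ∑ x, p1 x = 1) (t : ι) :
    ∑ z : ι → X, slotDensity p0 p1 t z = 1 := by
  simp only [slotDensity]
  rw [← Fintype.prod_sum fun ℓ x => if ℓ = t then p1 x else p0 x]
  refine prod_eq_one fun ℓ _ => ?_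
  split_ifs <;> assumption

lemma sum_slottedMixture [Nonempty ι] (hp0 : ∑ x, p0 x = 1) (hp1 : ∑ x, p1 x = 1) :
    ∑ z : ι → X, slottedMixture p0 p1 z = 1 := by
  simp only [slottedMixture, ← mul_sum]
  rw [sum_comm]
  simp [sum_slotDensity hp0 hp1]

lemma sum_slotDensity_mul_slotDensity_div (hp0 : ∑ x, p0 x = 1) (hp1 : ∑ x, p1 x = 1)
    (hac : ∀ x, p0 x = 0 → p1 x = 0) (t t' : ι) :
    ∑ z : ι → X, slotDensity p0 p1 t z * slotDensity p0 p1 t' z / ∏ ℓ, p0 (z ℓ)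
      = if t = t' then ∑ x, p1 x ^ 2 / p0 x else 1 := by
  have hfactor (ℓ : ι) :
      ∑ x, (if ℓ = t then p1 x else p0 x) * (if ℓ = t' then p1 x else p0 x) / p0 x
        = if ℓ = t then (if ℓ = t' then ∑ x, p1 x ^ 2 / p0 x else 1) else 1 := by
    split_ifs
    · simp only [sq]
    · simpa [mul_div_cancel_of_imp (hac _)] using hp1
    · simpa [mul_comm (p0 _), mul_div_cancel_of_imp (hac _)] using hp1
    · simpa [mul_div_cancel_of_imp (b := p0 _) id] using hp0
  simp only [slotDensity, ← prod_mul_distrib, ← prod_div_distrib]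
  rw [← Fintype.prod_sum (fun ℓ x =>
    (if ℓ = t then p1 x else p0 x) * (if ℓ = t' then p1 x else p0 x) / p0 x)]
  simp only [hfactor, prod_ite_eq', mem_univ, if_true]

lemma sum_slottedMixture_sq_div [Nonempty ι] (hp0 : ∑ x, p0 x = 1) (hp1 : ∑ x, p1 x = 1)
    (hac : ∀ x, p0 x = 0 → p1 x = 0) :
    ∑ z : ι → X, slottedMixture p0 p1 z ^ 2 / ∏ ℓ, p0 (z ℓ)
      = 1 + (∑ x, p1 x ^ 2 / p0 x - 1) / Fintype.card ι := by
  have hcard : (Fintype.card ι : ℝ) ≠ 0 := Nat.cast_ne_zero.mpr Fintype.card_ne_zero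
  have hexpand (z : ι → X) : slottedMixture p0 p1 z ^ 2 / ∏ ℓ, p0 (z ℓ)
      = 1 / (Fintype.card ι : ℝ) ^ 2 *
        ∑ t, ∑ t', slotDensity p0 p1 t z * slotDensity p0 p1 t' z / ∏ ℓ, p0 (z ℓ) := by
    simp only [slottedMixture, ← sum_div, ← sum_mul_sum]
    ring
  have hdiag (M : ℝ) (t : ι) :
      ∑ t', (if t = t' then M else 1) = Fintype.card ι + (M - 1) := by
    have hsplit (t' : ι) : (if t = t' then M else 1) = 1 + if t = t' then M - 1 else 0 := by
      split_ifs <;> ring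
    simp [hsplit, sum_add_distrib]
  have hswap : ∑ z : ι → X, ∑ t, ∑ t',
      slotDensity p0 p1 t z * slotDensity p0 p1 t' z / ∏ ℓ, p0 (z ℓ)
      = ∑ t, ∑ t', ∑ z : ι → X,
          slotDensity p0 p1 t z * slotDensity p0 p1 t' z / ∏ ℓ, p0 (z ℓ) := by
    rw [sum_comm]
    exact sum_congr rfl fun t _ => sum_comm
  simp only [hexpand, ← mul_sum]
  rw [hswap]
  simp only [sum_slotDensity_mul_slotDensity_div hp0 hp1 hac, hdiag, sum_const, card_univ,
    nsmul_eq_mul]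
  field_simp

theorem sum_slottedMixture_mul_log_le [Nonempty ι]
    (hp0 : ∀ x, 0 ≤ p0 x) (hp1 : ∀ x, 0 ≤ p1 x) (hp0sum : ∑ x, p0 x = 1)
    (hp1sum : ∑ x, p1 x = 1) (hac : ∀ x, p0 x = 0 → p1 x = 0) :
    ∑ z : ι → X, slottedMixture p0 p1 z * log (slottedMixture p0 p1 z / ∏ ℓ, p0 (z ℓ))
      ≤ (∑ x, p1 x ^ 2 / p0 x - 1) / Fintype.card ι := by
  have hnonneg (z : ι → X) : 0 ≤ slottedMixture p0 p1 z := by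
    refine mul_nonneg (by positivity) (sum_nonneg fun t _ => prod_nonneg fun ℓ _ => ?_)
    split_ifs
    exacts [hp1 _, hp0 _]
  calc _ ≤ ∑ z : ι → X, slottedMixture p0 p1 z ^ 2 / ∏ ℓ, p0 (z ℓ)
        - ∑ z : ι → X, slottedMixture p0 p1 z :=
        sum_mul_log_div_le_sum_sq_div_sub_sum hnonneg
          (fun z => prod_nonneg fun ℓ _ => hp0 _) fun z => slottedMixture_eq_zero hac
    _ = _ := by
        rw [sum_slottedMixture_sq_div hp0sum hp1sum hac, sum_slottedMixture hp0sum hp1sum]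
        ring

end SlottedMixture

lemma one_add_pow_sub_one_div_le_exp {a : ℝ} (ha : -1 ≤ a) (n L : ℕ) :
    ((1 + a) ^ n - 1) / L ≤ exp (n * a - log L) := by
  rcases L.eq_zero_or_pos with rfl | hL
  · simp only [Nat.cast_zero, div_zero]
    positivity
  have hLR : (0 : ℝ) < L := Nat.cast_pos.mpr hL
  rw [exp_sub, exp_log hLR, exp_nat_mul]
  gcongr
  calc (1 + a) ^ n - 1 ≤ (1 + a) ^ n := by linarith
    _ ≤ exp a ^ n := pow_le_pow_left₀ (by linarith) (by linarith [add_one_le_exp a]) n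

theorem stmt0_general {Z : Type*} [Fintype Z] (Q0 Q1 : Z → ℝ)
    (hQ0nonneg : ∀ z, 0 ≤ Q0 z) (hQ1nonneg : ∀ z, 0 ≤ Q1 z)
    (hQ0sum : ∑ z, Q0 z = 1) (hQ1sum : ∑ z, Q1 z = 1)
    (hac : ∀ z, Q0 z = 0 → Q1 z = 0)
    (n L : ℕ) (hL : 0 < L)
    (α : ℝ) (hα : α ∈ Set.Ioo (0 : ℝ) 1) :
    ∑ z : Fin L → Fin n → Z,
        ((1 / (L : ℝ)) * ∑ t : Fin L, ∏ ℓ : Fin L, ∏ i : Fin n,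
            (if ℓ = t then (1 - α) * Q0 (z ℓ i) + α * Q1 (z ℓ i) else Q0 (z ℓ i))) *
          Real.log
            (((1 / (L : ℝ)) * ∑ t : Fin L, ∏ ℓ : Fin L, ∏ i : Fin n,
                (if ℓ = t then (1 - α) * Q0 (z ℓ i) + α * Q1 (z ℓ i) else Q0 (z ℓ i))) /
              (∏ ℓ : Fin L, ∏ i : Fin n, Q0 (z ℓ i)))
      ≤ Real.exp ((n : ℝ) * α ^ 2 * (∑ z, (Q1 z - Q0 z) ^ 2 / Q0 z) - Real.log L) := by
  obtain ⟨hα0, hα1⟩ := hα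
  have : NeZero L := ⟨hL.ne'⟩
  set Qα : Z → ℝ := fun z => (1 - α) * Q0 z + α * Q1 z with hQα
  have hQαnonneg (z : Z) : 0 ≤ Qα z :=
    add_nonneg (mul_nonneg (by linarith) (hQ0nonneg z)) (mul_nonneg hα0.le (hQ1nonneg z))
  have hQαsum : ∑ z, Qα z = 1 := by
    simp only [hQα, sum_add_distrib, ← mul_sum, hQ0sum, hQ1sum]
    ring
  have hQαac (z : Z) (hz : Q0 z = 0) : Qα z = 0 := by simp [hQα, hz, hac z hz]
  have hpow_sum {Q : Z → ℝ} (hQ : ∑ z, Q z = 1) :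
      ∑ w : Fin n → Z, ∏ i, Q (w i) = 1 := by
    rw [← Fintype.sum_pow, hQ, one_pow]
  have hslot := sum_slottedMixture_mul_log_le (ι := Fin L)
    (p0 := fun w : Fin n → Z => ∏ i, Q0 (w i)) (p1 := fun w : Fin n → Z => ∏ i, Qα (w i))
    (fun w => prod_nonneg fun i _ => hQ0nonneg _)
    (fun w => prod_nonneg fun i _ => hQαnonneg _) (hpow_sum hQ0sum) (hpow_sum hQαsum)
    (fun w => prod_comp_eq_zero_of_imp hQαac)
  rw [sum_prod_sq_div_prod, sum_mixture_sq_div hQ0sum hQ1sum hac] at hslot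
  simp only [slottedMixture, slotDensity, Fintype.card_fin] at hslot
  simp only [prod_ite_irrel]
  refine hslot.trans ?_
  rw [mul_assoc]
  have hχ : 0 ≤ ∑ z, (Q1 z - Q0 z) ^ 2 / Q0 z :=
    sum_nonneg fun z _ => div_nonneg (sq_nonneg _) (hQ0nonneg z)
  exact one_add_pow_sub_one_div_le_exp (by nlinarith) n L

/-- For a finite alphabet `Z` with pmfs `Q0, Q1` (`Q1 ≪ Q0`, `Q1 ≠ Q0`),
`n, L` positive, `α ∈ (0,1)`, the relative entropy between the slotted mixture
`Q_α^N` (codeword slot chosen uniformly among `L` slots of length `n`) and the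
product `Q0^⊗N` is at most `exp(n α² χ₂(Q1‖Q0) − log L)`. The `N = n·L`
coordinates are modeled as `Fin L → Fin n → Z` (slot × position). -/
theorem stmt0 {Z : Type*} [Fintype Z] (Q0 Q1 : Z → ℝ)
    (hQ0nonneg : ∀ z, 0 ≤ Q0 z) (hQ1nonneg : ∀ z, 0 ≤ Q1 z)
    (hQ0sum : ∑ z, Q0 z = 1) (hQ1sum : ∑ z, Q1 z = 1)
    (hac : ∀ z, Q0 z = 0 → Q1 z = 0) (hne : Q1 ≠ Q0)
    (n L : ℕ) (hn : 0 < n) (hL : 0 < L)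
    (α : ℝ) (hα : α ∈ Set.Ioo (0 : ℝ) 1) :
    ∑ z : Fin L → Fin n → Z,
        ((1 / (L : ℝ)) * ∑ t : Fin L, ∏ ℓ : Fin L, ∏ i : Fin n,
            (if ℓ = t then (1 - α) * Q0 (z ℓ i) + α * Q1 (z ℓ i) else Q0 (z ℓ i))) *
          Real.log
            (((1 / (L : ℝ)) * ∑ t : Fin L, ∏ ℓ : Fin L, ∏ i : Fin n,
                (if ℓ = t then (1 - α) * Q0 (z ℓ i) + α * Q1 (z ℓ i) else Q0 (z ℓ i))) /
              (∏ ℓ : Fin L, ∏ i : Fin n, Q0 (z ℓ i)))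
      ≤ Real.exp ((n : ℝ) * α ^ 2 * (∑ z, (Q1 z - Q0 z) ^ 2 / Q0 z) - Real.log L) :=
  stmt0_general Q0 Q1 hQ0nonneg hQ1nonneg hQ0sum hQ1sum hac n L hL α hα
end

section
/- Let σ > 0 and a ∈ ℝ. Let q₀(z) = φ_{0,σ²}(z) and q_ρ(z) = ½ φ_{a,σ²}(z) + ½ φ_{−a,σ²}(z). Then ∫_ℝ q_ρ(z)²/q₀(z) dz = cosh(a²/σ²); equivalently, the chi-squared distance satisfies χ₂(Q_ρ‖Q₀) = ∫_ℝ (q_ρ(z) − q₀(z))²/q₀(z) dz = cosh(a²/σ²) − 1. -/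
/-- Gaussian density with mean `m` and variance `v`. -/
noncomputable def gaussDensity (m v z : ℝ) : ℝ :=
  (1 / Real.sqrt (2 * Real.pi * v)) * Real.exp (-(z - m) ^ 2 / (2 * v))

/-!
Dividing a product of two Gaussian densities of equal variance by the centred one completes a
square: `φ_a φ_b / φ_0 = exp (a b / v) φ_{a+b}`, so `∫ φ_a φ_b / φ_0 = exp (a b / v)`. Expanding
the square of the symmetric mixture gives `¼ e^{a²/v} + ½ e^{-a²/v} + ¼ e^{a²/v} = cosh (a²/v)`,
and `∫ (p - q)² / q = ∫ p² / q - 1` for any two probability densities turns this into the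
chi-squared distance.
-/

open MeasureTheory ProbabilityTheory Real

theorem integral_sub_sq_div_eq_integral_sq_div_sub_one {α : Type*} [MeasurableSpace α]
    {μ : Measure α} {p q : α → ℝ} (hq : ∀ x, q x ≠ 0) (hp_int : Integrable p μ)
    (hq_int : Integrable q μ) (hpq_int : Integrable (fun x ↦ p x ^ 2 / q x) μ)
    (hp : ∫ x, p x ∂μ = 1) (hq1 : ∫ x, q x ∂μ = 1) :
    ∫ x, (p x - q x) ^ 2 / q x ∂μ = ∫ x, p x ^ 2 / q x ∂μ - 1 := by
  have hexpand : (fun x ↦ (p x - q x) ^ 2 / q x) = fun x ↦ p x ^ 2 / q x - 2 * p x + q x := by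
    funext x
    field_simp [hq x]
    ring
  have hsub : Integrable (fun x ↦ p x ^ 2 / q x - 2 * p x) μ := hpq_int.sub (hp_int.const_mul 2)
  rw [hexpand, integral_add hsub hq_int, integral_sub hpq_int (hp_int.const_mul 2),
    integral_const_mul, hp, hq1]
  ring

section gaussDensity

variable {v : ℝ}

theorem gaussDensity_eq_gaussianPDFReal (m : ℝ) (hv : 0 ≤ v) :
    gaussDensity m v = gaussianPDFReal m ⟨v, hv⟩ := by
  funext z
  simp only [gaussDensity, one_div, gaussianPDFReal]
  rfl

theorem integrable_gaussDensity (m : ℝ) (hv : 0 ≤ v) : Integrable (gaussDensity m v) := by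
  rw [gaussDensity_eq_gaussianPDFReal m hv]
  exact integrable_gaussianPDFReal _ _

theorem integral_gaussDensity (m : ℝ) (hv : 0 < v) : ∫ z, gaussDensity m v z = 1 := by
  rw [gaussDensity_eq_gaussianPDFReal m hv.le]
  exact integral_gaussianPDFReal_eq_one m (fun h ↦ hv.ne' (congrArg NNReal.toReal h))

theorem gaussDensity_pos (m : ℝ) (hv : 0 < v) (z : ℝ) : 0 < gaussDensity m v z := by
  have : 0 < √(2 * π * v) := sqrt_pos.2 (by positivity)
  unfold gaussDensity
  positivity

theorem gaussDensity_mul_div_gaussDensity_zero (a b : ℝ) (hv : 0 < v) (z : ℝ) :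
    gaussDensity a v z * gaussDensity b v z / gaussDensity 0 v z
      = exp (a * b / v) * gaussDensity (a + b) v z := by
  have : 0 < √(2 * π * v) := sqrt_pos.2 (by positivity)
  unfold gaussDensity
  rw [div_eq_iff (by positivity)]
  field_simp
  rw [← exp_add, ← exp_add, ← exp_add]
  congr 1
  field_simp
  ring

theorem integrable_gaussDensity_mul_div_gaussDensity_zero (a b : ℝ) (hv : 0 < v) :
    Integrable (fun z ↦ gaussDensity a v z * gaussDensity b v z / gaussDensity 0 v z) := by
  simp only [gaussDensity_mul_div_gaussDensity_zero a b hv]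
  exact (integrable_gaussDensity _ hv.le).const_mul _

theorem integral_gaussDensity_mul_div_gaussDensity_zero (a b : ℝ) (hv : 0 < v) :
    ∫ z, gaussDensity a v z * gaussDensity b v z / gaussDensity 0 v z = exp (a * b / v) := by
  simp only [gaussDensity_mul_div_gaussDensity_zero a b hv]
  rw [integral_const_mul, integral_gaussDensity _ hv, mul_one]

theorem gaussMixture_sq_div_gaussDensity_zero (a : ℝ) (hv : 0 < v) :
    (fun z ↦ ((1 / 2) * gaussDensity a v z + (1 / 2) * gaussDensity (-a) v z) ^ 2 /
        gaussDensity 0 v z)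
      = fun z ↦ (1 / 4) * (gaussDensity a v z * gaussDensity a v z / gaussDensity 0 v z)
        + (1 / 2) * (gaussDensity a v z * gaussDensity (-a) v z / gaussDensity 0 v z)
        + (1 / 4) * (gaussDensity (-a) v z * gaussDensity (-a) v z / gaussDensity 0 v z) := by
  funext z
  field_simp [(gaussDensity_pos 0 hv z).ne']
  ring

theorem integrable_gaussMixture_sq_div_gaussDensity_zero (a : ℝ) (hv : 0 < v) :
    Integrable (fun z ↦ ((1 / 2) * gaussDensity a v z + (1 / 2) * gaussDensity (-a) v z) ^ 2 /
        gaussDensity 0 v z) := by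
  rw [gaussMixture_sq_div_gaussDensity_zero a hv]
  exact (((integrable_gaussDensity_mul_div_gaussDensity_zero a a hv).const_mul _).fun_add
    ((integrable_gaussDensity_mul_div_gaussDensity_zero a (-a) hv).const_mul _)).fun_add
    ((integrable_gaussDensity_mul_div_gaussDensity_zero (-a) (-a) hv).const_mul _)

theorem integral_gaussMixture_sq_div_gaussDensity_zero (a : ℝ) (hv : 0 < v) :
    ∫ z, ((1 / 2) * gaussDensity a v z + (1 / 2) * gaussDensity (-a) v z) ^ 2 /
        gaussDensity 0 v z = cosh (a ^ 2 / v) := by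
  have hint := fun b c ↦ integrable_gaussDensity_mul_div_gaussDensity_zero (v := v) b c hv
  rw [gaussMixture_sq_div_gaussDensity_zero a hv,
    integral_add (((hint a a).const_mul _).fun_add ((hint a (-a)).const_mul _))
      ((hint (-a) (-a)).const_mul _),
    integral_add ((hint a a).const_mul _) ((hint a (-a)).const_mul _),
    integral_const_mul, integral_const_mul, integral_const_mul,
    integral_gaussDensity_mul_div_gaussDensity_zero _ _ hv,
    integral_gaussDensity_mul_div_gaussDensity_zero _ _ hv,
    integral_gaussDensity_mul_div_gaussDensity_zero _ _ hv, cosh_eq]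
  ring_nf

theorem integrable_gaussMixture (a : ℝ) (hv : 0 ≤ v) :
    Integrable (fun z ↦ (1 / 2) * gaussDensity a v z + (1 / 2) * gaussDensity (-a) v z) :=
  ((integrable_gaussDensity a hv).const_mul _).fun_add
    ((integrable_gaussDensity (-a) hv).const_mul _)

theorem integral_gaussMixture (a : ℝ) (hv : 0 < v) :
    ∫ z, ((1 / 2) * gaussDensity a v z + (1 / 2) * gaussDensity (-a) v z) = 1 := by
  rw [integral_add ((integrable_gaussDensity a hv.le).const_mul _)
      ((integrable_gaussDensity (-a) hv.le).const_mul _),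
    integral_const_mul, integral_const_mul, integral_gaussDensity _ hv,
    integral_gaussDensity _ hv]
  norm_num

end gaussDensity

/-- For `σ > 0` and `a ∈ ℝ`, with `q₀ = φ_{0,σ²}` and
`q_ρ = ½ φ_{a,σ²} + ½ φ_{−a,σ²}`, one has `∫ q_ρ²/q₀ = cosh(a²/σ²)` and
`χ₂(Q_ρ‖Q₀) = ∫ (q_ρ − q₀)²/q₀ = cosh(a²/σ²) − 1`. -/
theorem stmt4 (σ a : ℝ) (hσ : 0 < σ) :
    (∫ z : ℝ,
        ((1 / 2) * gaussDensity a (σ ^ 2) z + (1 / 2) * gaussDensity (-a) (σ ^ 2) z) ^ 2 /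
          gaussDensity 0 (σ ^ 2) z)
      = Real.cosh (a ^ 2 / σ ^ 2) ∧
    (∫ z : ℝ,
        ((1 / 2) * gaussDensity a (σ ^ 2) z + (1 / 2) * gaussDensity (-a) (σ ^ 2) z
            - gaussDensity 0 (σ ^ 2) z) ^ 2 /
          gaussDensity 0 (σ ^ 2) z)
      = Real.cosh (a ^ 2 / σ ^ 2) - 1 := by
  have hv : 0 < σ ^ 2 := by positivity
  have hsq := integral_gaussMixture_sq_div_gaussDensity_zero a hv
  refine ⟨hsq, ?_⟩
  rw [integral_sub_sq_div_eq_integral_sq_div_sub_one (fun z ↦ (gaussDensity_pos 0 hv z).ne')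
    (integrable_gaussMixture a hv.le) (integrable_gaussDensity 0 hv.le) (integrable_gaussMixture_sq_div_gaussDensity_zero a hv)
    (integral_gaussMixture a hv) (integral_gaussDensity 0 hv), hsq]
end

section
/- (Chi-square concentration.) Let Z₁, …, Z_n be independent with Z_i ~ N(0, σ²) for every i, and let 0 < c < nσ². Then P( (1/n) Σ_{i=1}^n (Z_i² − σ²) > c ) ≤ exp( − n c² / (4σ⁴ + 4σ² c) ). -/
/-!
Chernoff's bound: `𝔼 exp (t (Z² - v)) = exp (-t v) / √(1 - 2 t v)` for `Z ~ N(0, v)`, and for the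
product measure this moment generating function is raised to the `n`-th power. At the optimal
parameter `t = c / (2 v (v + c))` one has `1 / √(1 - 2 t v) = √x` with `x = (v + c) / v`, and the
elementary bound `log x ≤ sinh (log x) = (x - x⁻¹) / 2` turns the optimal exponent into exactly
`-c² / (4 v (v + c))` per coordinate.
-/

open MeasureTheory ProbabilityTheory Real
open scoped NNReal

lemma Real.exp_mul_sum {ι : Type*} (s : Finset ι) (g : ι → ℝ) (t : ℝ) :
    exp (t * ∑ i ∈ s, g i) = ∏ i ∈ s, exp (t * g i) := by
  rw [Finset.mul_sum, exp_sum]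

lemma Real.sqrt_le_exp_sub_inv_div_four {x : ℝ} (hx : 1 ≤ x) : √x ≤ exp ((x - x⁻¹) / 4) := by
  have hx0 : 0 < x := zero_lt_one.trans_le hx
  rw [sqrt_eq_rpow, rpow_def_of_pos hx0, exp_le_exp]
  linarith [self_le_sinh_iff.2 (log_nonneg hx), sinh_log hx0]

namespace ProbabilityTheory

lemma gaussianPDFReal_zero_mul_exp_mul_sq (v : ℝ≥0) (t x : ℝ) :
    gaussianPDFReal 0 v x * exp (t * x ^ 2)
      = (√(2 * π * v))⁻¹ * exp (-((2 * (v : ℝ))⁻¹ - t) * x ^ 2) := by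
  rw [gaussianPDFReal, mul_assoc, ← exp_add]
  ring_nf

section GaussianSquare

variable {v : ℝ≥0} {t : ℝ}

lemma integrable_exp_mul_sq_gaussianReal (hv : v ≠ 0) (ht : 2 * t * v < 1) :
    Integrable (fun x ↦ exp (t * x ^ 2)) (gaussianReal 0 v) := by
  have hb : 0 < (2 * (v : ℝ))⁻¹ - t := by
    rw [sub_pos, ← one_div, lt_div_iff₀ (by positivity)]
    linarith
  rw [gaussianReal_of_var_ne_zero 0 hv, gaussianPDF_def, integrable_withDensity_iff_integrable_smul'
    (by fun_prop) (ae_of_all _ fun _ ↦ ENNReal.ofReal_lt_top)]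
  simp only [ENNReal.toReal_ofReal (gaussianPDFReal_nonneg _ _ _), smul_eq_mul,
    gaussianPDFReal_zero_mul_exp_mul_sq]
  exact (integrable_exp_neg_mul_sq hb).const_mul _

-- For `2 t v ≥ 1` both sides are junk `0`, which is why no bound on `t` is needed.
lemma mgf_sq_gaussianReal (hv : v ≠ 0) :
    mgf (fun x ↦ x ^ 2) (gaussianReal 0 v) t = (√(1 - 2 * t * v))⁻¹ := by
  have hv0 : (0 : ℝ) < v := by positivity
  simp only [mgf, integral_gaussianReal_eq_integral_smul hv, smul_eq_mul,
    gaussianPDFReal_zero_mul_exp_mul_sq]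
  rw [integral_const_mul, integral_gaussian, ← sqrt_inv, ← sqrt_mul (by positivity), ← sqrt_inv]
  congr 1
  field_simp

lemma mgf_sq_sub_gaussianReal (hv : v ≠ 0) :
    mgf (fun x ↦ x ^ 2 - v) (gaussianReal 0 v) t = exp (-(t * v)) * (√(1 - 2 * t * v))⁻¹ := by
  simp only [sub_eq_add_neg, mgf_add_const, mgf_sq_gaussianReal hv, mul_neg, mul_comm]

-- `t = c / (2 v (v + c))` minimises the Chernoff exponent `-t (v + c) - log (1 - 2 t v) / 2`.
lemma exp_neg_mul_mul_mgf_sq_sub_gaussianReal_le (hv : v ≠ 0) {c : ℝ} (hc : 0 ≤ c) :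
    exp (-(c / (2 * v * (v + c))) * c) *
        mgf (fun x ↦ x ^ 2 - v) (gaussianReal 0 v) (c / (2 * v * (v + c)))
      ≤ exp (-c ^ 2 / (4 * v ^ 2 + 4 * v * c)) := by
  have hv0 : (0 : ℝ) < v := by positivity
  set x : ℝ := (v + c) / v with hx
  have hx1 : 1 ≤ x := by rw [hx, le_div_iff₀ hv0]; linarith
  have h1 : 1 - 2 * (c / (2 * v * (v + c))) * v = x⁻¹ := by rw [hx]; field_simp; ring
  rw [mgf_sq_sub_gaussianReal hv, h1, sqrt_inv, inv_inv, ← mul_assoc, ← exp_add]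
  calc exp _ * √x ≤ exp (-(c / (2 * v * (v + c))) * c + -(c / (2 * v * (v + c)) * v))
        * exp ((x - x⁻¹) / 4) := by gcongr; exact sqrt_le_exp_sub_inv_div_four hx1
    _ = exp (-c ^ 2 / (4 * v ^ 2 + 4 * v * c)) := by
        rw [← exp_add]; congr 1; rw [hx]; field_simp; ring

end GaussianSquare

section Product

variable {ι E : Type*} [Fintype ι] {mE : MeasurableSpace E} {μ : Measure E} [SigmaFinite μ]

lemma integrable_exp_mul_sum_pi {f : E → ℝ} {t : ℝ}
    (hf : Integrable (fun x ↦ exp (t * f x)) μ) :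
    Integrable (fun z : ι → E ↦ exp (t * ∑ i, f (z i))) (Measure.pi fun _ ↦ μ) := by
  simp only [exp_mul_sum]
  exact Integrable.fintype_prod fun _ ↦ hf

lemma mgf_sum_pi (f : E → ℝ) (t : ℝ) :
    mgf (fun z : ι → E ↦ ∑ i, f (z i)) (Measure.pi fun _ ↦ μ) t = mgf f μ t ^ Fintype.card ι := by
  simp only [mgf, exp_mul_sum]
  exact integral_fintype_prod_eq_pow fun x ↦ exp (t * f x)

end Product

theorem measureReal_sum_sq_sub_ge_le {ι : Type*} [Fintype ι] {v : ℝ≥0} (hv : v ≠ 0) {c : ℝ}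
    (hc : 0 ≤ c) :
    (Measure.pi fun _ : ι ↦ gaussianReal 0 v).real
        {z | Fintype.card ι * c ≤ ∑ i, (z i ^ 2 - v)}
      ≤ exp (-(Fintype.card ι * c ^ 2) / (4 * v ^ 2 + 4 * v * c)) := by
  set n := Fintype.card ι
  set t := c / (2 * v * (v + c)) with ht_def
  have hv0 : (0 : ℝ) < v := by positivity
  have ht : 0 ≤ t := by positivity
  have h2t : 2 * t * v < 1 := by
    rw [show 2 * t * v = c / (v + c) by rw [ht_def]; field_simp, div_lt_one (by positivity)]
    linarith
  have hint : Integrable (fun x ↦ exp (t * (x ^ 2 - v))) (gaussianReal 0 v) := by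
    convert (integrable_exp_mul_sq_gaussianReal hv h2t).const_mul (exp (-(t * v))) using 2
    rw [← exp_add]; ring_nf
  calc _ ≤ exp (-t * (n * c)) * mgf (fun z : ι → ℝ ↦ ∑ i, (z i ^ 2 - v))
          (Measure.pi fun _ ↦ gaussianReal 0 v) t :=
        measure_ge_le_exp_mul_mgf _ ht (integrable_exp_mul_sum_pi hint)
    _ = (exp (-t * c) * mgf (fun x ↦ x ^ 2 - v) (gaussianReal 0 v) t) ^ n := by
        rw [mgf_sum_pi (fun x ↦ x ^ 2 - (v : ℝ)), mul_pow, ← exp_nat_mul]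
        congr 2
        ring
    _ ≤ exp (-c ^ 2 / (4 * v ^ 2 + 4 * v * c)) ^ n := by
        gcongr
        · exact mul_nonneg (exp_pos _).le mgf_nonneg
        · exact exp_neg_mul_mul_mgf_sq_sub_gaussianReal_le hv hc
    _ = _ := by rw [← exp_nat_mul]; ring_nf

end ProbabilityTheory

theorem stmt9_general (σ : ℝ) (hσ : 0 < σ) (n : ℕ) (c : ℝ) (hc : 0 < c) :
    ((Measure.pi fun _ : Fin n => gaussianReal 0 ⟨σ ^ 2, sq_nonneg σ⟩)
        {z | c < (1 / (n : ℝ)) * ∑ i, ((z i) ^ 2 - σ ^ 2)}).toReal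
      ≤ Real.exp (-(n * c ^ 2) / (4 * σ ^ 4 + 4 * σ ^ 2 * c)) := by
  set v : ℝ≥0 := ⟨σ ^ 2, sq_nonneg σ⟩
  have hvσ : (v : ℝ) = σ ^ 2 := rfl
  have hv : v ≠ 0 := fun h ↦ (pow_pos hσ 2).ne' (congrArg NNReal.toReal h)
  have hsub : {z : Fin n → ℝ | c < (1 / (n : ℝ)) * ∑ i, ((z i) ^ 2 - σ ^ 2)}
      ⊆ {z | n * c ≤ ∑ i, (z i ^ 2 - v)} := by
    intro z hz
    rcases n.eq_zero_or_pos with rfl | hn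
    · exact absurd hz (by simpa using hc.le)
    · rw [Set.mem_ofPred_eq, one_div, inv_mul_eq_div, lt_div_iff₀ (by positivity)] at hz
      simpa [hvσ, mul_comm] using hz.le
  calc _ ≤ (Measure.pi fun _ : Fin n ↦ gaussianReal 0 v).real {z | n * c ≤ ∑ i, (z i ^ 2 - v)} :=
        measureReal_mono hsub
    _ ≤ exp (-(n * c ^ 2) / (4 * v ^ 2 + 4 * v * c)) := by
        simpa only [Fintype.card_fin] using measureReal_sum_sq_sub_ge_le (ι := Fin n) hv hc.le
    _ = _ := by rw [hvσ]; ring_nf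

/-- **Chi-square concentration.** Let `Z₁, …, Zₙ` be i.i.d. `N(0, σ²)` and
`0 < c < nσ²`. Then `P((1/n) Σᵢ (Zᵢ² − σ²) > c) ≤ exp(−n c² / (4σ⁴ + 4σ² c))`. -/
theorem stmt9 (σ : ℝ) (hσ : 0 < σ) (n : ℕ) (c : ℝ) (hc : 0 < c) (hcn : c < n * σ ^ 2) :
    ((Measure.pi fun _ : Fin n => gaussianReal 0 ⟨σ ^ 2, sq_nonneg σ⟩)
        {z | c < (1 / (n : ℝ)) * ∑ i, ((z i) ^ 2 - σ ^ 2)}).toReal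
      ≤ Real.exp (-(n * c ^ 2) / (4 * σ ^ 4 + 4 * σ ^ 2 * c)) :=
  stmt9_general σ hσ n c hc
end

section
/- Let 𝒵 be a finite set and Q₀, Q₁ probability mass functions on 𝒵 with Q₁ absolutely continuous with respect to Q₀ and Q₁ ≠ Q₀, and let χ₂ = Σ_z (Q₁(z)−Q₀(z))²/Q₀(z). Fix ε > 1. For each n, let L_n be a positive integer with L_n → ∞ and (log L_n)/n → 0, let N_n = n L_n, and let C_n be a nonempty finite set of binary codewords in {0,1}^n each of weight at least ε √(2 n log L_n / χ₂). Let H₀ be the hypothesis that Z^{N_n} is i.i.d. Q₀, and let H₁ be the hypothesis that a codeword x ∈ C_n chosen uniformly at random is placed in a slot t chosen uniformly at random among L_n slots of length n, and, independently across coordinates, Z_j ~ Q₁ at coordinates where the placed symbol is 1 and Z_j ~ Q₀ at all other coordinates. Then there exists a sequence of measurable rejection regions A_n ⊆ 𝒵^{N_n} such that the false-alarm probabilities α_n = P_{H₀}(A_n) and missed-detection probabilities β_n = P_{H₁}(A_nᶜ) both tend to 0 as n → ∞. -/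
/-!
The test rejects when, in some slot, the sum of the scores `f = Q₁/Q₀ - 1` exceeds
`τ = (1 + ε)/2 · n χ₂ s` with `s = √(2 log L / (n χ₂))`. The score has mean `0` and second moment
`χ₂` under `Q₀`, and mean `χ₂` under `Q₁`. A Chernoff bound with parameter `s`, using
`eˣ ≤ 1 + x + x²/2 + |x|³` for `|x| ≤ 1`, bounds the false-alarm probability of one slot by
`L^(-ε + o(1))`, so the union bound over the `L` slots gives `L^(1 - ε + o(1)) → 0`. Under `H₁` the
score sum of the occupied slot has mean `w χ₂ ≥ ε n χ₂ s`, and a Chernoff bound for its lower tail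
with parameter `η s`, for a fixed small `η > 0`, gives a missed-detection probability
`L^(-c + o(1))` with `c > 0`. Both bounds tend to `0` because `log L → ∞` and `s → 0`.
-/

open Filter Finset Real Topology

section ProductSums

variable {ι Y : Type*} [Fintype ι] [DecidableEq ι] [Fintype Y]

theorem sum_prod_eq_one (q : ι → Y → ℝ) (hq : ∀ i, ∑ y, q i y = 1) :
    ∑ y : ι → Y, ∏ i, q i (y i) = 1 := by
  rw [← Fintype.prod_sum]
  simp [hq]

theorem sum_apply_mul_prod_eq (p : ι → Y → ℝ) (t : ι)
    (hp : ∀ ℓ ≠ t, ∑ y, p ℓ y = 1) (φ : Y → ℝ) :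
    ∑ z : ι → Y, φ (z t) * ∏ ℓ, p ℓ (z ℓ) = ∑ y, φ y * p t y := by
  set g := Function.update p t fun y => φ y * p t y
  have hg : ∀ z : ι → Y, φ (z t) * ∏ ℓ, p ℓ (z ℓ) = ∏ ℓ, g ℓ (z ℓ) := by
    intro z
    rw [← mul_prod_erase univ _ (mem_univ t), ← mul_prod_erase univ _ (mem_univ t), ← mul_assoc]
    congr 1
    · simp [g]
    · exact prod_congr rfl fun ℓ hℓ => by simp [g, ne_of_mem_erase hℓ]
  rw [sum_congr rfl fun z _ => hg z, ← Fintype.prod_sum, Fintype.prod_eq_single t]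
  · simp [g]
  · intro ℓ hℓ
    simp [g, hℓ, hp ℓ hℓ]

theorem sum_ite_le_exp_mul_prod_sum (q : ι → Y → ℝ) (hq : ∀ i y, 0 ≤ q i y) (g : Y → ℝ)
    (τ : ℝ) {s : ℝ} (hs : 0 ≤ s) :
    ∑ y : ι → Y, (if τ ≤ ∑ i, g (y i) then 1 else 0) * ∏ i, q i (y i)
      ≤ exp (-(s * τ)) * ∏ i, ∑ x, q i x * exp (s * g x) := by
  have markov : ∀ y : ι → Y, (if τ ≤ ∑ i, g (y i) then 1 else 0) * ∏ i, q i (y i)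
      ≤ exp (-(s * τ)) * ∏ i, (q i (y i) * exp (s * g (y i))) := by
    intro y
    calc (if τ ≤ ∑ i, g (y i) then 1 else 0) * ∏ i, q i (y i)
        ≤ exp (-(s * τ) + s * ∑ i, g (y i)) * ∏ i, q i (y i) := by
          refine mul_le_mul_of_nonneg_right ?_ (prod_nonneg fun i _ => hq i (y i))
          split_ifs with h
          · exact one_le_exp (by nlinarith)
          · exact (exp_pos _).le
      _ = _ := by rw [prod_mul_distrib, ← exp_sum, ← mul_sum, exp_add]; ring
  calc _ ≤ _ := sum_le_sum fun y _ => markov y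
    _ = _ := by rw [← mul_sum, Fintype.prod_sum]

end ProductSums

theorem exp_le_one_add_add_sq_div_two_add_abs_pow_three {x : ℝ} (hx : |x| ≤ 1) :
    exp x ≤ 1 + x + x ^ 2 / 2 + |x| ^ 3 := by
  have h := (abs_le.mp (Real.exp_bound hx (n := 3) (by norm_num))).2
  norm_num [sum_range_succ, Nat.factorial] at h
  nlinarith [pow_nonneg (abs_nonneg x) 3]

section MomentGenerating

variable {Y : Type*} [Fintype Y]

theorem sum_mul_sq_le_sq (Q g : Y → ℝ) (hQ : ∀ y, 0 ≤ Q y) (hQsum : ∑ y, Q y = 1) {B : ℝ}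
    (hB : ∀ y, |g y| ≤ B) : ∑ y, Q y * g y ^ 2 ≤ B ^ 2 := by
  calc ∑ y, Q y * g y ^ 2 ≤ ∑ y, Q y * B ^ 2 :=
        sum_le_sum fun y _ => mul_le_mul_of_nonneg_left
          (sq_le_sq' (abs_le.mp (hB y)).1 (abs_le.mp (hB y)).2) (hQ y)
    _ = B ^ 2 := by rw [← sum_mul, hQsum, one_mul]

theorem sum_mul_exp_le_exp (Q g : Y → ℝ) (hQ : ∀ y, 0 ≤ Q y) (hQsum : ∑ y, Q y = 1)
    {B μ v s : ℝ} (hB : ∀ y, |g y| ≤ B) (hμ : ∑ y, Q y * g y = μ)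
    (hv : ∑ y, Q y * g y ^ 2 ≤ v) (hs : 0 ≤ s) (hsB : s * B ≤ 1) :
    ∑ y, Q y * exp (s * g y) ≤ exp (s * μ + s ^ 2 * v / 2 + s ^ 3 * B ^ 3) := by
  have hcube : ∑ y, Q y * |g y| ^ 3 ≤ B ^ 3 := by
    calc ∑ y, Q y * |g y| ^ 3 ≤ ∑ y, Q y * B ^ 3 := by
          gcongr with y
          · exact hQ y
          · exact hB y
      _ = B ^ 3 := by rw [← sum_mul, hQsum, one_mul]
  have taylor : ∀ y, Q y * exp (s * g y)
      ≤ Q y + s * (Q y * g y) + s ^ 2 / 2 * (Q y * g y ^ 2) + s ^ 3 * (Q y * |g y| ^ 3) := by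
    intro y
    have hx : |s * g y| ≤ 1 := by
      rw [abs_mul, abs_of_nonneg hs]
      exact (mul_le_mul_of_nonneg_left (hB y) hs).trans hsB
    have h := mul_le_mul_of_nonneg_left
      (exp_le_one_add_add_sq_div_two_add_abs_pow_three hx) (hQ y)
    rw [abs_mul, abs_of_nonneg hs] at h
    linarith
  calc ∑ y, Q y * exp (s * g y)
      ≤ ∑ y, (Q y + s * (Q y * g y) + s ^ 2 / 2 * (Q y * g y ^ 2) + s ^ 3 * (Q y * |g y| ^ 3)) :=
        sum_le_sum fun y _ => taylor y
    _ = 1 + s * μ + s ^ 2 / 2 * ∑ y, Q y * g y ^ 2 + s ^ 3 * ∑ y, Q y * |g y| ^ 3 := by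
        simp only [sum_add_distrib, ← mul_sum, hQsum, hμ]
    _ ≤ 1 + (s * μ + s ^ 2 * v / 2 + s ^ 3 * B ^ 3) := by
        have := mul_le_mul_of_nonneg_left hv (sq_nonneg s)
        have := mul_le_mul_of_nonneg_left hcube (pow_nonneg hs 3)
        linarith
    _ ≤ _ := by linarith [add_one_le_exp (s * μ + s ^ 2 * v / 2 + s ^ 3 * B ^ 3)]

theorem sum_ite_le_exp_of_abs_le {ι : Type*} [Fintype ι] [DecidableEq ι] (q : ι → Y → ℝ)
    (hq : ∀ i y, 0 ≤ q i y) (hqsum : ∀ i, ∑ y, q i y = 1) (g : Y → ℝ) {B v s : ℝ}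
    (μ : ι → ℝ) (hB : ∀ y, |g y| ≤ B) (hμ : ∀ i, ∑ y, q i y * g y = μ i)
    (hv : ∀ i, ∑ y, q i y * g y ^ 2 ≤ v) (hs : 0 ≤ s) (hsB : s * B ≤ 1) (τ : ℝ) :
    ∑ y : ι → Y, (if τ ≤ ∑ i, g (y i) then 1 else 0) * ∏ i, q i (y i)
      ≤ exp (-(s * τ) + ∑ i, (s * μ i + s ^ 2 * v / 2 + s ^ 3 * B ^ 3)) := by
  refine (sum_ite_le_exp_mul_prod_sum q hq g τ hs).trans ?_
  rw [exp_add, exp_sum]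
  refine mul_le_mul_of_nonneg_left (prod_le_prod (fun i _ => ?_) fun i _ => ?_) (exp_pos _).le
  · exact sum_nonneg fun y _ => mul_nonneg (hq i y) (exp_pos _).le
  · exact sum_mul_exp_le_exp (q i) g (hq i) (hqsum i) hB (hμ i) (hv i) hs hsB

end MomentGenerating

def scanRegion {Z ι κ : Type*} [Fintype κ] (g : Z → ℝ) (τ : ℝ) : Set (ι → κ → Z) :=
  {z | ∃ ℓ, τ ≤ ∑ i, g (z ℓ i)}

def placedDensity {Z ι κ : Type*} [Fintype ι] [DecidableEq ι] [Fintype κ] (Q0 Q1 : Z → ℝ)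
    (x : κ → Bool) (t : ι) (z : ι → κ → Z) : ℝ :=
  ∏ ℓ, ∏ i, if ℓ = t ∧ x i = true then Q1 (z ℓ i) else Q0 (z ℓ i)

theorem placedDensity_nonneg {Z ι κ : Type*} [Fintype ι] [DecidableEq ι] [Fintype κ]
    {Q0 Q1 : Z → ℝ} (hQ0 : ∀ z, 0 ≤ Q0 z) (hQ1 : ∀ z, 0 ≤ Q1 z)
    (x : κ → Bool) (t : ι) (z : ι → κ → Z) : 0 ≤ placedDensity Q0 Q1 x t z :=
  prod_nonneg fun _ _ => prod_nonneg fun _ _ => by split_ifs; exacts [hQ1 _, hQ0 _]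

section ScanTest

variable {Z ι κ : Type*} [Fintype Z] [Fintype ι] [DecidableEq ι] [Fintype κ] [DecidableEq κ]

theorem sum_indicator_scanRegion_le_card_mul_exp (Q g : Z → ℝ) (hQ : ∀ z, 0 ≤ Q z)
    (hQsum : ∑ z, Q z = 1) {B μ v s : ℝ} (hB : ∀ z, |g z| ≤ B) (hμ : ∑ z, Q z * g z = μ)
    (hv : ∑ z, Q z * g z ^ 2 ≤ v) (hs : 0 ≤ s) (hsB : s * B ≤ 1) (τ : ℝ) :
    ∑ z : ι → κ → Z, (scanRegion g τ).indicator (fun z => ∏ ℓ, ∏ i, Q (z ℓ i)) z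
      ≤ Fintype.card ι *
          exp (-(s * τ) + Fintype.card κ * (s * μ + s ^ 2 * v / 2 + s ^ 3 * B ^ 3)) := by
  set φ : (κ → Z) → ℝ := fun y => if τ ≤ ∑ i, g (y i) then 1 else 0
  have hφ : ∀ y, 0 ≤ φ y := fun y => by positivity
  have hP : ∀ z : ι → κ → Z, 0 ≤ ∏ ℓ, ∏ i, Q (z ℓ i) :=
    fun z => prod_nonneg fun ℓ _ => prod_nonneg fun i _ => hQ _
  have union_bound : ∀ z : ι → κ → Z,
      (scanRegion g τ).indicator (fun z => ∏ ℓ, ∏ i, Q (z ℓ i)) z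
        ≤ ∑ ℓ, φ (z ℓ) * ∏ ℓ', ∏ i, Q (z ℓ' i) := by
    intro z
    by_cases hz : z ∈ scanRegion g τ
    · rw [Set.indicator_of_mem hz]
      obtain ⟨ℓ, hℓ⟩ := hz
      calc ∏ ℓ', ∏ i, Q (z ℓ' i) = φ (z ℓ) * ∏ ℓ', ∏ i, Q (z ℓ' i) := by simp [φ, hℓ]
        _ ≤ _ := single_le_sum (f := fun ℓ => φ (z ℓ) * ∏ ℓ', ∏ i, Q (z ℓ' i))
          (fun ℓ _ => mul_nonneg (hφ _) (hP z)) (mem_univ ℓ)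
    · rw [Set.indicator_of_notMem hz]
      exact sum_nonneg fun ℓ _ => mul_nonneg (hφ _) (hP z)
  calc _ ≤ ∑ z : ι → κ → Z, ∑ ℓ, φ (z ℓ) * ∏ ℓ', ∏ i, Q (z ℓ' i) :=
        sum_le_sum fun z _ => union_bound z
    _ = ∑ _ℓ : ι, ∑ y, φ y * ∏ i, Q (y i) := by
        rw [sum_comm]
        refine sum_congr rfl fun ℓ _ => ?_
        exact sum_apply_mul_prod_eq (fun (_ : ι) (y : κ → Z) => ∏ i, Q (y i)) ℓ
          (fun _ _ => sum_prod_eq_one (fun _ => Q) fun _ => hQsum) φ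
    _ ≤ ∑ _ℓ : ι, exp (-(s * τ) + ∑ _i : κ, (s * μ + s ^ 2 * v / 2 + s ^ 3 * B ^ 3)) := by
        gcongr
        exact sum_ite_le_exp_of_abs_le (fun _ => Q) (fun _ => hQ)
          (fun _ => hQsum) g (fun _ => μ) hB (fun _ => hμ) (fun _ => hv) hs hsB τ
    _ = _ := by simp only [sum_const, card_univ, nsmul_eq_mul]

theorem sum_indicator_compl_scanRegion_le_exp (Q0 Q1 g : Z → ℝ) (hQ0 : ∀ z, 0 ≤ Q0 z)
    (hQ1 : ∀ z, 0 ≤ Q1 z) (hQ0sum : ∑ z, Q0 z = 1) (hQ1sum : ∑ z, Q1 z = 1) {B μ s : ℝ}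
    (hB : ∀ z, |g z| ≤ B) (hμ0 : ∑ z, Q0 z * g z = 0) (hμ1 : ∑ z, Q1 z * g z = μ)
    (hs : 0 ≤ s) (hsB : s * B ≤ 1) (τ : ℝ) (x : κ → Bool) (t : ι) :
    ∑ z : ι → κ → Z, (scanRegion g τ)ᶜ.indicator (placedDensity Q0 Q1 x t) z
      ≤ exp (s * τ - s * (#{i | x i = true} * μ)
          + Fintype.card κ * (s ^ 2 * B ^ 2 / 2 + s ^ 3 * B ^ 3)) := by
  set p : ι → (κ → Z) → ℝ := fun ℓ y => ∏ i, if ℓ = t ∧ x i = true then Q1 (y i) else Q0 (y i)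
  set q : κ → Z → ℝ := fun i => if x i = true then Q1 else Q0
  have hq : ∀ i z, 0 ≤ q i z := fun i z => by unfold q; split_ifs <;> simp [hQ0, hQ1]
  have hqsum : ∀ i, ∑ z, q i z = 1 := fun i => by unfold q; split_ifs <;> assumption
  have hpt : ∀ y, p t y = ∏ i, q i (y i) := fun y =>
    prod_congr rfl fun i _ => by unfold q; split_ifs <;> simp_all
  set φ : (κ → Z) → ℝ := fun y => if -τ ≤ ∑ i, -g (y i) then 1 else 0
  have hφ : ∀ z : ι → κ → Z,
      (scanRegion g τ)ᶜ.indicator (placedDensity Q0 Q1 x t) z ≤ φ (z t) * ∏ ℓ, p ℓ (z ℓ) := by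
    intro z
    have hP : 0 ≤ placedDensity Q0 Q1 x t z := placedDensity_nonneg hQ0 hQ1 x t z
    by_cases hz : z ∈ (scanRegion g τ)ᶜ
    · have hlt : ∑ i, g (z t i) < τ := not_le.mp fun h => hz ⟨t, h⟩
      have : -τ ≤ ∑ i, -g (z t i) := by rw [sum_neg_distrib]; linarith
      rw [Set.indicator_of_mem hz, show φ (z t) = 1 from if_pos this, one_mul]
      rfl
    · rw [Set.indicator_of_notMem hz]
      exact mul_nonneg (by positivity) hP
  have hmean : ∀ i, ∑ z, q i z * -g z = -(if x i = true then μ else 0) := fun i => by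
    unfold q; split_ifs <;> simp [sum_neg_distrib, hμ0, hμ1]
  have hvar : ∀ i, ∑ z, q i z * (-g z) ^ 2 ≤ B ^ 2 := fun i =>
    sum_mul_sq_le_sq (q i) _ (hq i) (hqsum i) fun z => by rw [abs_neg]; exact hB z
  calc _ ≤ ∑ z : ι → κ → Z, φ (z t) * ∏ ℓ, p ℓ (z ℓ) := sum_le_sum fun z _ => hφ z
    _ = ∑ y, φ y * ∏ i, q i (y i) := by
        rw [sum_apply_mul_prod_eq p t ?_ φ]
        · simp only [hpt]
        · intro ℓ hℓ
          simpa [p, hℓ] using sum_prod_eq_one (fun _ => Q0) fun _ => hQ0sum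
    _ ≤ _ := sum_ite_le_exp_of_abs_le q hq hqsum (fun z => -g z) _
          (fun z => by rw [abs_neg]; exact hB z) hmean hvar hs hsB (-τ)
    _ = _ := by
        congr 1
        simp only [sum_add_distrib, mul_neg, sum_neg_distrib, ← mul_sum, sum_ite, sum_const]
        simp only [neg_neg, nsmul_eq_mul, Bool.not_eq_true, card_univ]
        ring

end ScanTest

theorem sum_indicator_uniform_mixture_le {Ω X : Type*} [Fintype Ω] (A : Set Ω) (C : Finset X)
    {m : ℕ} (P : X → Fin m → Ω → ℝ) {δ : ℝ} (hδ : 0 ≤ δ)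
    (hP : ∀ x ∈ C, ∀ t, ∑ ω, A.indicator (P x t) ω ≤ δ) :
    ∑ ω, A.indicator (fun ω => 1 / ((#C : ℝ) * m) * ∑ x ∈ C, ∑ t, P x t ω) ω ≤ δ := by
  have hind : ∀ ω, A.indicator (fun ω => 1 / ((#C : ℝ) * m) * ∑ x ∈ C, ∑ t, P x t ω) ω
      = 1 / ((#C : ℝ) * m) * ∑ x ∈ C, ∑ t, A.indicator (P x t) ω := fun ω => by
    by_cases h : ω ∈ A <;> simp [h]
  calc _ = 1 / ((#C : ℝ) * m) * ∑ x ∈ C, ∑ t, ∑ ω, A.indicator (P x t) ω := by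
        simp only [hind, ← mul_sum]
        rw [sum_comm]
        exact congrArg _ (sum_congr rfl fun x _ => sum_comm)
    _ ≤ 1 / ((#C : ℝ) * m) * ∑ _x ∈ C, ∑ _t : Fin m, δ := by
        gcongr with x hx t
        exact hP x hx t
    _ ≤ δ := by
        simp only [sum_const, card_univ, Fintype.card_fin, nsmul_eq_mul]
        rcases eq_or_ne ((#C : ℝ) * m) 0 with h | h
        · simp [← mul_assoc, h, hδ]
        · rw [← mul_assoc (#C : ℝ), ← mul_assoc, one_div_mul_cancel h, one_mul]

section ChiSquared

variable {Z : Type*} {Q0 Q1 : Z → ℝ}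

noncomputable def chiSq [Fintype Z] (Q0 Q1 : Z → ℝ) : ℝ := ∑ z, (Q1 z - Q0 z) ^ 2 / Q0 z

-- At points with `Q0 z = 0` the value is the junk `-1`; they carry no mass under `Q0` or `Q1`.
noncomputable def chiSqScore (Q0 Q1 : Z → ℝ) (z : Z) : ℝ := Q1 z / Q0 z - 1

theorem chiSq_pos [Fintype Z] (hQ0 : ∀ z, 0 ≤ Q0 z) (hac : ∀ z, Q0 z = 0 → Q1 z = 0)
    (hne : Q1 ≠ Q0) : 0 < chiSq Q0 Q1 := by
  obtain ⟨z, hz⟩ := Function.ne_iff.mp hne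
  have hQ0z : Q0 z ≠ 0 := fun h => hz (by rw [hac z h, h])
  exact sum_pos' (fun z _ => div_nonneg (sq_nonneg _) (hQ0 z))
    ⟨z, mem_univ z, div_pos (sq_pos_of_ne_zero (sub_ne_zero.mpr hz)) ((hQ0 z).lt_of_ne' hQ0z)⟩

theorem mul_chiSqScore (hac : ∀ z, Q0 z = 0 → Q1 z = 0) (z : Z) :
    Q0 z * chiSqScore Q0 Q1 z = Q1 z - Q0 z := by
  by_cases h : Q0 z = 0
  · simp [chiSqScore, h, hac z h]
  · rw [chiSqScore]
    field_simp

theorem sum_mul_chiSqScore_eq_zero [Fintype Z] (hac : ∀ z, Q0 z = 0 → Q1 z = 0)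
    (hQ0sum : ∑ z, Q0 z = 1) (hQ1sum : ∑ z, Q1 z = 1) : ∑ z, Q0 z * chiSqScore Q0 Q1 z = 0 := by
  simp [mul_chiSqScore hac, hQ0sum, hQ1sum]

theorem sum_mul_chiSqScore_sq_eq_chiSq [Fintype Z] (hac : ∀ z, Q0 z = 0 → Q1 z = 0) :
    ∑ z, Q0 z * chiSqScore Q0 Q1 z ^ 2 = chiSq Q0 Q1 := by
  refine sum_congr rfl fun z _ => ?_
  by_cases h : Q0 z = 0
  · simp [chiSqScore, h, hac z h]
  · rw [chiSqScore]
    field_simp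

theorem sum_alt_mul_chiSqScore_eq_chiSq [Fintype Z] (hac : ∀ z, Q0 z = 0 → Q1 z = 0)
    (hQ0sum : ∑ z, Q0 z = 1) (hQ1sum : ∑ z, Q1 z = 1) :
    ∑ z, Q1 z * chiSqScore Q0 Q1 z = chiSq Q0 Q1 := by
  have h : ∀ z, Q1 z * chiSqScore Q0 Q1 z = (Q1 z - Q0 z) ^ 2 / Q0 z + (Q1 z - Q0 z) := by
    intro z
    by_cases h : Q0 z = 0
    · simp [chiSqScore, h, hac z h]
    · rw [chiSqScore]
      field_simp
      ring
  rw [sum_congr rfl fun z _ => h z, sum_add_distrib, sum_sub_distrib, hQ0sum, hQ1sum, sub_self,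
    add_zero, chiSq]

end ChiSquared

theorem exists_pos_forall_abs_le {Y : Type*} [Fintype Y] (g : Y → ℝ) :
    ∃ B, 0 < B ∧ ∀ y, |g y| ≤ B :=
  ⟨∑ y, |g y| + 1, by positivity, fun y =>
    (single_le_sum (fun y _ => abs_nonneg (g y)) (mem_univ y)).trans
      (le_add_of_nonneg_right zero_le_one)⟩

noncomputable def scanScale (χ : ℝ) (m n : ℕ) : ℝ := √(2 / χ * (log m / n))

section ScanScale

variable {χ : ℝ} {m n : ℕ}

theorem natCast_mul_scanScale_sq_mul (hχ : 0 < χ) (hn : 0 < n) :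
    n * scanScale χ m n ^ 2 * χ = 2 * log m := by
  have : 0 ≤ log m := log_natCast_nonneg m
  rw [scanScale, sq_sqrt (by positivity)]
  field_simp

theorem natCast_mul_scanScale (hχ : 0 < χ) (hn : 0 < n) :
    n * scanScale χ m n = √(2 * n * log m / χ) := by
  rw [← sqrt_sq (by unfold scanScale; positivity : (0 : ℝ) ≤ n * scanScale χ m n)]
  congr 1
  have := natCast_mul_scanScale_sq_mul (m := m) hχ hn
  rw [eq_div_iff hχ.ne']
  linear_combination (n : ℝ) * this

theorem tendsto_scanScale {L : ℕ → ℕ} (hL : Tendsto (fun n => log (L n) / n) atTop (𝓝 0)) :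
    Tendsto (fun n => scanScale χ (L n) n) atTop (𝓝 0) := by
  simpa [scanScale] using (hL.const_mul (2 / χ)).sqrt

end ScanScale

section ScanTestRates

variable {Z : Type*} [Fintype Z] {m n : ℕ} {B χ ε s : ℝ}

theorem sum_indicator_scanRegion_le_exp_log_mul (Q g : Z → ℝ) (hQ : ∀ z, 0 ≤ Q z)
    (hQsum : ∑ z, Q z = 1) (hB : ∀ z, |g z| ≤ B) (hμ : ∑ z, Q z * g z = 0)
    (hv : ∑ z, Q z * g z ^ 2 ≤ χ) (hχ : 0 < χ) (hs : 0 ≤ s) (hsB : s * B ≤ 1) (hm : 0 < m)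
    (hns : n * s ^ 2 * χ = 2 * log m) :
    ∑ z : Fin m → Fin n → Z,
        (scanRegion g ((1 + ε) / 2 * n * χ * s)).indicator (fun z => ∏ ℓ, ∏ i, Q (z ℓ i)) z
      ≤ exp (log m * (1 - ε + 2 * B ^ 3 / χ * s)) := by
  have hlog : log m = n * s ^ 2 * χ / 2 := by linarith
  calc _ ≤ m * exp (-(s * ((1 + ε) / 2 * n * χ * s))
          + n * (s * 0 + s ^ 2 * χ / 2 + s ^ 3 * B ^ 3)) := by
        simpa using sum_indicator_scanRegion_le_card_mul_exp (ι := Fin m) (κ := Fin n) Q g hQ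
          hQsum hB hμ hv hs hsB ((1 + ε) / 2 * n * χ * s)
    _ = exp (log m + (-(s * ((1 + ε) / 2 * n * χ * s))
          + n * (s * 0 + s ^ 2 * χ / 2 + s ^ 3 * B ^ 3))) := by
        rw [exp_add (log _), exp_log (by exact_mod_cast hm)]
    _ = _ := by
        congr 1
        rw [hlog]
        field_simp
        ring

theorem sum_indicator_compl_scanRegion_mixture_le_exp_log_mul (Q0 Q1 g : Z → ℝ)
    (hQ0 : ∀ z, 0 ≤ Q0 z) (hQ1 : ∀ z, 0 ≤ Q1 z) (hQ0sum : ∑ z, Q0 z = 1) (hQ1sum : ∑ z, Q1 z = 1)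
    (hB : ∀ z, |g z| ≤ B) (hμ0 : ∑ z, Q0 z * g z = 0) (hμ1 : ∑ z, Q1 z * g z = χ) (hχ : 0 < χ)
    {η : ℝ} (hη : 0 ≤ η) (hs : 0 ≤ s) (hηsB : η * s * B ≤ 1)
    (hns : n * s ^ 2 * χ = 2 * log m) (C : Finset (Fin n → Bool))
    (hC : ∀ x ∈ C, ε * (n * s) ≤ #{i | x i = true}) :
    ∑ z : Fin m → Fin n → Z, (scanRegion g ((1 + ε) / 2 * n * χ * s))ᶜ.indicator
        (fun z => 1 / ((#C : ℝ) * m) * ∑ x ∈ C, ∑ t, placedDensity Q0 Q1 x t z) z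
      ≤ exp (log m * (η * (1 - ε) + η ^ 2 * (B ^ 2 / χ) + 2 * η ^ 3 * B ^ 3 / χ * s)) := by
  refine sum_indicator_uniform_mixture_le _ C _ (exp_pos _).le fun x hx t => ?_
  refine (sum_indicator_compl_scanRegion_le_exp Q0 Q1 g hQ0 hQ1 hQ0sum hQ1sum hB hμ0 hμ1
    (mul_nonneg hη hs) hηsB _ x t).trans (exp_le_exp.2 ?_)
  have hw := mul_le_mul_of_nonneg_left (hC x hx) (by positivity : 0 ≤ η * s * χ)
  have hlog : log m = n * s ^ 2 * χ / 2 := by linarith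
  have gap : log m * (η * (1 - ε) + η ^ 2 * (B ^ 2 / χ) + 2 * η ^ 3 * B ^ 3 / χ * s)
      - (η * s * ((1 + ε) / 2 * n * χ * s) - η * s * (#{i | x i = true} * χ)
        + Fintype.card (Fin n) * ((η * s) ^ 2 * B ^ 2 / 2 + (η * s) ^ 3 * B ^ 3))
      = η * s * χ * #{i | x i = true} - η * s * χ * (ε * (n * s)) := by
    rw [hlog, Fintype.card_fin]
    field_simp
    ring
  linarith

end ScanTestRates

theorem tendsto_nhds_zero_of_le_exp_log_mul {u s : ℕ → ℝ} {L : ℕ → ℕ} {c d : ℝ}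
    (hL : Tendsto L atTop atTop) (hs : Tendsto s atTop (𝓝 0)) (hc : c < 0) (hu0 : ∀ n, 0 ≤ u n)
    (hu : ∀ᶠ n in atTop, u n ≤ exp (log (L n) * (c + d * s n))) : Tendsto u atTop (𝓝 0) := by
  have hlog : Tendsto (fun n => log (L n)) atTop atTop :=
    tendsto_log_atTop.comp (tendsto_natCast_atTop_atTop.comp hL)
  have hcd : Tendsto (fun n => c + d * s n) atTop (𝓝 c) := by
    simpa using (hs.const_mul d).const_add c
  exact squeeze_zero' (Eventually.of_forall hu0) hu
    (tendsto_exp_atBot.comp (hlog.atTop_mul_neg hc hcd))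

theorem exists_pos_mul_add_sq_mul_neg {c b : ℝ} (hc : c < 0) (hb : 0 < b) :
    ∃ η, 0 < η ∧ η * c + η ^ 2 * b < 0 := by
  have hη : 0 < -c / (2 * b) := div_pos (neg_pos.2 hc) (by positivity)
  refine ⟨-c / (2 * b), hη, ?_⟩
  have : -c / (2 * b) * b = -c / 2 := by field_simp
  calc -c / (2 * b) * c + (-c / (2 * b)) ^ 2 * b = -c / (2 * b) * (c + -c / (2 * b) * b) := by
        ring
    _ < 0 := mul_neg_of_pos_of_neg hη (by linarith)

section ScanTestConsistency

variable {Z : Type*} [Fintype Z] {B χ ε : ℝ} {L : ℕ → ℕ}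

theorem tendsto_sum_indicator_scanRegion (Q g : Z → ℝ) (hQ : ∀ z, 0 ≤ Q z)
    (hQsum : ∑ z, Q z = 1) (hB : ∀ z, |g z| ≤ B) (hμ : ∑ z, Q z * g z = 0)
    (hv : ∑ z, Q z * g z ^ 2 ≤ χ) (hχ : 0 < χ) (hε : 1 < ε) (hL : Tendsto L atTop atTop)
    (hLn : Tendsto (fun n => log (L n) / n) atTop (𝓝 0)) :
    Tendsto (fun n => ∑ z : Fin (L n) → Fin n → Z,
        (scanRegion g ((1 + ε) / 2 * n * χ * scanScale χ (L n) n)).indicator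
          (fun z => ∏ ℓ, ∏ i, Q (z ℓ i)) z) atTop (𝓝 0) := by
  have hs := tendsto_scanScale (χ := χ) hLn
  refine tendsto_nhds_zero_of_le_exp_log_mul (d := 2 * B ^ 3 / χ) hL hs (sub_neg.2 hε)
    (fun n => sum_nonneg fun z _ => Set.indicator_nonneg (fun z _ =>
      prod_nonneg fun _ _ => prod_nonneg fun _ _ => hQ _) z) ?_
  filter_upwards [eventually_gt_atTop 0, hL.eventually_gt_atTop 0,
    (hs.mul_const B).eventually_le_const (u := 1) (by simp)] with n hn hm hsB
  exact sum_indicator_scanRegion_le_exp_log_mul Q g hQ hQsum hB hμ hv hχ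
    (sqrt_nonneg _ : 0 ≤ scanScale χ (L n) n) hsB hm (natCast_mul_scanScale_sq_mul hχ hn)

theorem tendsto_sum_indicator_compl_scanRegion (Q0 Q1 g : Z → ℝ) (hQ0 : ∀ z, 0 ≤ Q0 z)
    (hQ1 : ∀ z, 0 ≤ Q1 z) (hQ0sum : ∑ z, Q0 z = 1) (hQ1sum : ∑ z, Q1 z = 1)
    (hB : ∀ z, |g z| ≤ B) (hB0 : 0 < B) (hμ0 : ∑ z, Q0 z * g z = 0)
    (hμ1 : ∑ z, Q1 z * g z = χ) (hχ : 0 < χ) (hε : 1 < ε) (hL : Tendsto L atTop atTop)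
    (hLn : Tendsto (fun n => log (L n) / n) atTop (𝓝 0)) (C : (n : ℕ) → Finset (Fin n → Bool))
    (hC : ∀ n, ∀ x ∈ C n, ε * √(2 * n * log (L n) / χ) ≤ #{i | x i = true}) :
    Tendsto (fun n => ∑ z : Fin (L n) → Fin n → Z,
        (scanRegion g ((1 + ε) / 2 * n * χ * scanScale χ (L n) n))ᶜ.indicator
          (fun z => 1 / ((#(C n) : ℝ) * L n) * ∑ x ∈ C n, ∑ t, placedDensity Q0 Q1 x t z) z)
      atTop (𝓝 0) := by
  have hs := tendsto_scanScale (χ := χ) hLn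
  obtain ⟨η, hη, hc⟩ := exists_pos_mul_add_sq_mul_neg (sub_neg.2 hε) (by positivity : 0 < B ^ 2 / χ)
  refine tendsto_nhds_zero_of_le_exp_log_mul (d := 2 * η ^ 3 * B ^ 3 / χ) hL hs hc
    (fun n => sum_nonneg fun z _ => Set.indicator_nonneg (fun z _ => mul_nonneg (by positivity)
      (sum_nonneg fun x _ => sum_nonneg fun t _ => placedDensity_nonneg hQ0 hQ1 x t z)) z) ?_
  filter_upwards [eventually_gt_atTop 0,
    ((hs.const_mul η).mul_const B).eventually_le_const (u := 1) (by simp)] with n hn hηsB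
  exact sum_indicator_compl_scanRegion_mixture_le_exp_log_mul Q0 Q1 g hQ0 hQ1 hQ0sum hQ1sum hB
    hμ0 hμ1 hχ hη.le (sqrt_nonneg _ : 0 ≤ scanScale χ (L n) n) hηsB
    (natCast_mul_scanScale_sq_mul hχ hn) (C n)
    fun x hx => (congrArg (ε * ·) (natCast_mul_scanScale hχ hn)).trans_le (hC n x hx)

end ScanTestConsistency

theorem stmt17_general {Z : Type*} [Fintype Z] (Q0 Q1 : Z → ℝ)
    (hQ0nonneg : ∀ z, 0 ≤ Q0 z) (hQ1nonneg : ∀ z, 0 ≤ Q1 z)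
    (hQ0sum : ∑ z, Q0 z = 1) (hQ1sum : ∑ z, Q1 z = 1)
    (hac : ∀ z, Q0 z = 0 → Q1 z = 0) (hne : Q1 ≠ Q0)
    (ε : ℝ) (hε : 1 < ε)
    (L : ℕ → ℕ)
    (hLinf : Tendsto L atTop atTop)
    (hLsub : Tendsto (fun n => Real.log (L n) / (n : ℝ)) atTop (nhds 0))
    (C : (n : ℕ) → Finset (Fin n → Bool))
    (hCwt : ∀ n, ∀ x ∈ C n,
      ε * Real.sqrt (2 * (n : ℝ) * Real.log (L n) / (∑ z, (Q1 z - Q0 z) ^ 2 / Q0 z))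
        ≤ ((Finset.univ.filter fun i => x i = true).card : ℝ)) :
    ∃ A : (n : ℕ) → Set (Fin (L n) → Fin n → Z),
      Tendsto (fun n =>
          ∑ z : Fin (L n) → Fin n → Z,
            Set.indicator (A n) (fun z' => ∏ ℓ, ∏ i, Q0 (z' ℓ i)) z)
        atTop (nhds 0) ∧
      Tendsto (fun n =>
          ∑ z : Fin (L n) → Fin n → Z,
            Set.indicator (A n)ᶜ
              (fun z' => (1 / (((C n).card : ℝ) * (L n : ℝ))) *
                ∑ x ∈ C n, ∑ t : Fin (L n), ∏ ℓ, ∏ i,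
                  (if ℓ = t ∧ x i = true then Q1 (z' ℓ i) else Q0 (z' ℓ i))) z)
        atTop (nhds 0) := by
  have hχ : 0 < chiSq Q0 Q1 := chiSq_pos hQ0nonneg hac hne
  have hμ0 := sum_mul_chiSqScore_eq_zero hac hQ0sum hQ1sum
  obtain ⟨B, hB0, hB⟩ := exists_pos_forall_abs_le (chiSqScore Q0 Q1)
  exact ⟨fun n => scanRegion (chiSqScore Q0 Q1)
      ((1 + ε) / 2 * n * chiSq Q0 Q1 * scanScale (chiSq Q0 Q1) (L n) n),
    tendsto_sum_indicator_scanRegion Q0 _ hQ0nonneg hQ0sum hB hμ0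
      (sum_mul_chiSqScore_sq_eq_chiSq hac).le hχ hε hLinf hLsub,
    tendsto_sum_indicator_compl_scanRegion Q0 Q1 _ hQ0nonneg hQ1nonneg hQ0sum hQ1sum hB hB0 hμ0
      (sum_alt_mul_chiSqScore_eq_chiSq hac hQ0sum hQ1sum) hχ hε hLinf hLsub C hCwt⟩

/-- Fix pmfs `Q0, Q1` on a finite alphabet with `Q1 ≪ Q0`, `Q1 ≠ Q0`, and
`χ₂ = Σ_z (Q1(z)−Q0(z))²/Q0(z)`, and `ε > 1`. Let `Lₙ → ∞` with `(log Lₙ)/n → 0`, and for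
each `n` let `Cₙ` be a nonempty set of binary codewords of length `n`, each of weight at
least `ε √(2 n log Lₙ / χ₂)`. Under `H₀` the `N = n·Lₙ` observations (modeled as
`Fin (Lₙ) → Fin n → Z`, slot × position) are i.i.d. `Q0`; under `H₁` a uniformly chosen
codeword is placed in a uniformly chosen slot and each coordinate carrying a `1` has law
`Q1`, all others `Q0`. Then there are rejection regions `Aₙ` whose false-alarm and
missed-detection probabilities both tend to `0`. -/
theorem stmt17 {Z : Type*} [Fintype Z] (Q0 Q1 : Z → ℝ)
    (hQ0nonneg : ∀ z, 0 ≤ Q0 z) (hQ1nonneg : ∀ z, 0 ≤ Q1 z)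
    (hQ0sum : ∑ z, Q0 z = 1) (hQ1sum : ∑ z, Q1 z = 1)
    (hac : ∀ z, Q0 z = 0 → Q1 z = 0) (hne : Q1 ≠ Q0)
    (ε : ℝ) (hε : 1 < ε)
    (L : ℕ → ℕ) (hLpos : ∀ n, 0 < L n)
    (hLinf : Tendsto L atTop atTop)
    (hLsub : Tendsto (fun n => Real.log (L n) / (n : ℝ)) atTop (nhds 0))
    (C : (n : ℕ) → Finset (Fin n → Bool))
    (hCne : ∀ n, (C n).Nonempty)
    (hCwt : ∀ n, ∀ x ∈ C n,
      ε * Real.sqrt (2 * (n : ℝ) * Real.log (L n) / (∑ z, (Q1 z - Q0 z) ^ 2 / Q0 z))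
        ≤ ((Finset.univ.filter fun i => x i = true).card : ℝ)) :
    ∃ A : (n : ℕ) → Set (Fin (L n) → Fin n → Z),
      Tendsto (fun n =>
          ∑ z : Fin (L n) → Fin n → Z,
            Set.indicator (A n) (fun z' => ∏ ℓ, ∏ i, Q0 (z' ℓ i)) z)
        atTop (nhds 0) ∧
      Tendsto (fun n =>
          ∑ z : Fin (L n) → Fin n → Z,
            Set.indicator (A n)ᶜ
              (fun z' => (1 / (((C n).card : ℝ) * (L n : ℝ))) *
                ∑ x ∈ C n, ∑ t : Fin (L n), ∏ ℓ, ∏ i,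
                  (if ℓ = t ∧ x i = true then Q1 (z' ℓ i) else Q0 (z' ℓ i))) z)
        atTop (nhds 0) :=
  stmt17_general Q0 Q1 hQ0nonneg hQ1nonneg hQ0sum hQ1sum hac hne ε hε L hLinf hLsub C hCwt
end
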